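/- Let p be a continuous probability density on ℝ≥0 with associated random variable X (P(X=0) < 1), and define c_k^{(p)}(t) = ∫₀ᵗ p^{*(k)}(s) ds. Then for fixed t, the map p ↦ Σ_{k=1}^∞ c_k^{(p)}(t) is continuous as a function from (densities in L¹(ℝ≥0), L¹ topology) to ℝ. -/
import Mathlib

open MeasureTheory intervalIntegral

/-- Iterated self-convolution on the half-line: `itConv p k = p^{*(k+1)}`. -/
noncomputable def itConv (p : ℝ → ℝ) : ℕ → ℝ → ℝ
  | 0 => p
  | (k + 1) => fun t => ∫ s in (0:ℝ)..t, p (t - s) * itConv p k s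

/-- The conditions for `p` to be a continuous probability density on `ℝ≥0`. -/
def IsCtsDensity (p : ℝ → ℝ) : Prop :=
  Continuous p ∧ (∀ x, 0 ≤ p x) ∧ (∀ x < (0:ℝ), p x = 0) ∧
    Integrable p ∧ (∫ x in Set.Ioi (0:ℝ), p x) = 1

open scoped Convolution


namespace Stmt17

noncomputable abbrev mulL : ℝ →L[ℝ] ℝ →L[ℝ] ℝ := ContinuousLinearMap.mul ℝ ℝ

lemma zero_of_nonpos {p : ℝ → ℝ} (hp : IsCtsDensity p) : ∀ x ≤ (0:ℝ), p x = 0 := by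
  intro x hx
  rcases lt_or_eq_of_le hx with h | h
  · exact hp.2.2.1 x h
  · subst h
    have h1 : Filter.Tendsto p (nhdsWithin 0 (Set.Iio 0)) (nhds (p 0)) :=
      (hp.1.continuousWithinAt (s := Set.Iio 0) (x := 0))
    have h2 : Filter.Tendsto p (nhdsWithin 0 (Set.Iio 0)) (nhds 0) := by
      apply Filter.Tendsto.congr' _ tendsto_const_nhds
      filter_upwards [self_mem_nhdsWithin] with y hy
      exact (hp.2.2.1 y hy).symm
    exact (tendsto_nhds_unique h1 h2)

/-- `ep f x = e^{-x} f x`. -/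
noncomputable def ep (f : ℝ → ℝ) : ℝ → ℝ := fun x => Real.exp (-x) * f x

lemma ep_integrable {f : ℝ → ℝ} (hf : Integrable f) (h0 : ∀ x ≤ (0:ℝ), f x = 0) :
    Integrable (ep f) := by
  apply hf.mono
  · exact ((Real.continuous_exp.comp continuous_neg).aestronglyMeasurable).mul
      hf.aestronglyMeasurable
  · apply Filter.Eventually.of_forall
    intro x
    rcases le_or_gt x 0 with hx | hx
    · simp [ep, h0 x hx]
    · simp only [ep, Real.norm_eq_abs, abs_mul, abs_of_pos (Real.exp_pos _)]
      nlinarith [Real.exp_le_one_iff.mpr (by linarith : -x ≤ 0), abs_nonneg (f x),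
        Real.exp_pos (-x)]

lemma ep_conv (f g : ℝ → ℝ) : ep (f ⋆[mulL] g) = (ep f) ⋆[mulL] (ep g) := by
  funext x
  simp only [ep, convolution_def]
  rw [← MeasureTheory.integral_const_mul]
  congr 1
  funext s
  simp only [ContinuousLinearMap.mul_apply']
  rw [show Real.exp (-s) * f s * (Real.exp (-(x - s)) * g (x - s))
      = (Real.exp (-s) * Real.exp (-(x - s))) * (f s * g (x - s)) by ring,
    ← Real.exp_add]
  ring_nf

/-- L¹ bound for convolutions. -/
lemma conv_L1 {f g : ℝ → ℝ} (hf : Integrable f) (hg : Integrable g) :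
    (∫ x, |(f ⋆[mulL] g) x|) ≤ (∫ x, |f x|) * (∫ x, |g x|) := by
  have habs : Integrable (fun x => |f x|) := hf.abs
  have hgabs : Integrable (fun x => |g x|) := hg.abs
  have h1 : ∀ x, |(f ⋆[mulL] g) x| ≤ ((fun y => |f y|) ⋆[mulL] (fun y => |g y|)) x := by
    intro x
    rw [convolution_def, convolution_def]
    calc |∫ s, mulL (f s) (g (x - s))| = ‖∫ s, mulL (f s) (g (x - s))‖ :=
          (Real.norm_eq_abs _).symm
      _ ≤ ∫ s, ‖mulL (f s) (g (x - s))‖ := MeasureTheory.norm_integral_le_integral_norm _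
      _ = ∫ s, mulL (|f s|) (|g (x - s)|) := by
          congr 1; funext s
          simp [ContinuousLinearMap.mul_apply', abs_mul, Real.norm_eq_abs]
  calc (∫ x, |(f ⋆[mulL] g) x|)
      ≤ ∫ x, ((fun y => |f y|) ⋆[mulL] (fun y => |g y|)) x := by
        apply integral_mono (hf.integrable_convolution mulL hg).abs
          (habs.integrable_convolution mulL hgabs) h1
    _ = (∫ x, |f x|) * (∫ x, |g x|) := by
        rw [integral_convolution mulL habs hgabs]; simp

/-- a.e. decomposition of difference of convolutions. -/
lemma conv_diff_ae {f₁ f₂ g₁ g₂ : ℝ → ℝ} (hf₁ : Integrable f₁) (hf₂ : Integrable f₂)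
    (hg₁ : Integrable g₁) (hg₂ : Integrable g₂) :
    (fun x => (f₁ ⋆[mulL] g₁) x - (f₂ ⋆[mulL] g₂) x) =ᵐ[volume]
      (fun x => (f₁ ⋆[mulL] (fun y => g₁ y - g₂ y)) x
        + ((fun y => f₁ y - f₂ y) ⋆[mulL] g₂) x) := by
  filter_upwards [hf₁.ae_convolution_exists mulL hg₁, hf₁.ae_convolution_exists mulL hg₂,
    hf₂.ae_convolution_exists mulL hg₂] with x h11 h12 h22
  have h11' : Integrable (fun s => f₁ s * g₁ (x - s)) := h11
  have h12' : Integrable (fun s => f₁ s * g₂ (x - s)) := h12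
  have h22' : Integrable (fun s => f₂ s * g₂ (x - s)) := h22
  simp only [convolution_def, ContinuousLinearMap.mul_apply']
  have e1 : (∫ s, f₁ s * (g₁ (x - s) - g₂ (x - s)))
      = (∫ s, f₁ s * g₁ (x - s)) - ∫ s, f₁ s * g₂ (x - s) := by
    rw [← integral_sub h11' h12']
    congr 1; funext s; ring
  have e2 : (∫ s, (f₁ s - f₂ s) * g₂ (x - s))
      = (∫ s, f₁ s * g₂ (x - s)) - ∫ s, f₂ s * g₂ (x - s) := by
    rw [← integral_sub h12' h22']
    congr 1; funext s; ring
  rw [e1, e2]; ring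

variable {p : ℝ → ℝ} (hp : IsCtsDensity p)

include hp

lemma itConv_zero_of_nonpos : ∀ k, ∀ x ≤ (0:ℝ), itConv p k x = 0 := by
  intro k
  induction k with
  | zero => exact zero_of_nonpos hp
  | succ k ih =>
    intro x hx
    show (∫ s in (0:ℝ)..x, p (x - s) * itConv p k s) = 0
    rw [intervalIntegral.integral_of_ge hx]
    have : ∀ s ∈ Set.Ioc x (0:ℝ), p (x - s) * itConv p k s = 0 := by
      intro s hs
      rw [ih s hs.2, mul_zero]
    rw [setIntegral_congr_fun measurableSet_Ioc this]
    simp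

lemma itConv_succ_eq_conv (k : ℕ) :
    itConv p (k + 1) = (itConv p k) ⋆[mulL] p := by
  funext x
  have key : ∀ s : ℝ, itConv p k s * p (x - s)
      = (Set.Ioc (0:ℝ) x).indicator (fun s => itConv p k s * p (x - s)) s := by
    intro s
    by_cases hs : s ∈ Set.Ioc (0:ℝ) x
    · rw [Set.indicator_of_mem hs]
    · rw [Set.indicator_of_notMem hs]
      rcases not_and_or.mp hs with h | h
      · rw [itConv_zero_of_nonpos hp k s (le_of_not_gt h), zero_mul]
      · rw [zero_of_nonpos hp (x - s) (by linarith [lt_of_not_ge h]), mul_zero]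
  have hconv : ((itConv p k) ⋆[mulL] p) x = ∫ s in Set.Ioc (0:ℝ) x, itConv p k s * p (x - s) := by
    rw [convolution_def]
    rw [← MeasureTheory.integral_indicator measurableSet_Ioc]
    congr 1
    funext s
    simpa using key s
  rcases le_or_gt 0 x with hx | hx
  · show (∫ s in (0:ℝ)..x, p (x - s) * itConv p k s) = _
    rw [intervalIntegral.integral_of_le hx, hconv]
    congr 1
    funext s
    ring
  · rw [itConv_zero_of_nonpos hp (k+1) x hx.le, hconv]
    have : Set.Ioc (0:ℝ) x = ∅ := Set.Ioc_eq_empty (by linarith)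
    rw [this]
    simp

lemma itConv_integrable : ∀ k, Integrable (itConv p k) := by
  intro k
  induction k with
  | zero => exact hp.2.2.2.1
  | succ k ih =>
    rw [itConv_succ_eq_conv hp k]
    exact ih.integrable_convolution mulL hp.2.2.2.1

lemma itConv_nonneg : ∀ k, ∀ x, 0 ≤ itConv p k x := by
  intro k
  induction k with
  | zero => exact hp.2.1
  | succ k ih =>
    intro x
    rcases le_or_gt 0 x with hx | hx
    · show 0 ≤ ∫ s in (0:ℝ)..x, p (x - s) * itConv p k s
      apply intervalIntegral.integral_nonneg hx
      intro s _
      exact mul_nonneg (hp.2.1 _) (ih s)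
    · rw [itConv_zero_of_nonpos hp (k+1) x hx.le]

lemma integral_p_eq_one : (∫ x, p x) = 1 := by
  have : p = (Set.Ioi (0:ℝ)).indicator p := by
    funext x
    by_cases hx : x ∈ Set.Ioi (0:ℝ)
    · rw [Set.indicator_of_mem hx]
    · rw [Set.indicator_of_notMem hx, zero_of_nonpos hp x (le_of_not_gt hx)]
  rw [this, MeasureTheory.integral_indicator measurableSet_Ioi]
  exact hp.2.2.2.2

lemma itConv_integral_eq_one : ∀ k, (∫ x, itConv p k x) = 1 := by
  intro k
  induction k with
  | zero => exact integral_p_eq_one hp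
  | succ k ih =>
    rw [itConv_succ_eq_conv hp k, integral_convolution mulL (itConv_integrable hp k) hp.2.2.2.1]
    simp [ih, integral_p_eq_one hp]

/-- the Laplace transform of `p` at `1`. -/
noncomputable def rho (p : ℝ → ℝ) : ℝ := ∫ x, ep p x

lemma rho_nonneg : 0 ≤ rho p := by
  apply MeasureTheory.integral_nonneg
  intro x
  exact mul_nonneg (Real.exp_pos _).le (hp.2.1 x)

lemma rho_lt_one : rho p < 1 := by
  by_contra hcon
  push_neg at hcon
  set h : ℝ → ℝ := fun x => p x - ep p x with hh
  have hint : Integrable h := hp.2.2.2.1.sub (ep_integrable hp.2.2.2.1 (zero_of_nonpos hp))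
  have hnn : ∀ x, 0 ≤ h x := by
    intro x
    rcases le_or_gt x 0 with hx | hx
    · simp [hh, ep, zero_of_nonpos hp x hx]
    · have h1 : Real.exp (-x) ≤ 1 := Real.exp_le_one_iff.mpr (by linarith)
      have := hp.2.1 x
      simp only [hh, ep]
      nlinarith
  have hle : (∫ x, h x) ≤ 0 := by
    have : (∫ x, h x) = 1 - rho p := by
      rw [hh]
      rw [integral_sub hp.2.2.2.1 (ep_integrable hp.2.2.2.1 (zero_of_nonpos hp))]
      rw [integral_p_eq_one hp, rho]
    linarith
  have hzero : (∫ x, h x) = 0 :=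
    le_antisymm hle (integral_nonneg hnn)
  have hae : h =ᵐ[volume] 0 :=
    (integral_eq_zero_iff_of_nonneg hnn hint).mp hzero
  have hcont : Continuous h := hp.1.sub ((Real.continuous_exp.comp continuous_neg).mul hp.1)
  have heq : h = 0 := (Continuous.ae_eq_iff_eq volume hcont continuous_const).mp hae
  have hpz : ∀ x, p x = 0 := by
    intro x
    rcases le_or_gt x 0 with hx | hx
    · exact zero_of_nonpos hp x hx
    · have := congrFun heq x
      simp only [hh, ep, Pi.zero_apply] at this
      have h1 : Real.exp (-x) < 1 := by
        rw [Real.exp_lt_one_iff]; linarith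
      nlinarith
  have : (∫ x in Set.Ioi (0:ℝ), p x) = 0 := by
    simp [funext hpz]
  rw [hp.2.2.2.2] at this
  norm_num at this

lemma itConv_laplace : ∀ k, (∫ x, ep (itConv p k) x) = (rho p) ^ (k + 1) := by
  intro k
  induction k with
  | zero => rw [pow_one]; rfl
  | succ k ih =>
    rw [itConv_succ_eq_conv hp k, ep_conv,
      integral_convolution mulL
        (ep_integrable (itConv_integrable hp k) (itConv_zero_of_nonpos hp k))
        (ep_integrable hp.2.2.2.1 (zero_of_nonpos hp))]
    simp only [ContinuousLinearMap.mul_apply']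
    rw [ih]
    rw [show (rho p) = ∫ x, ep p x from rfl]
    ring


variable {q : ℝ → ℝ}



lemma abs_itConv_integral (k : ℕ) : (∫ x, |itConv p k x|) = 1 := by
  rw [show (fun x => |itConv p k x|) = itConv p k from
    funext fun x => abs_of_nonneg (itConv_nonneg hp k x)]
  exact itConv_integral_eq_one hp k

lemma diff_L1 (hq : IsCtsDensity q) : ∀ k,
    (∫ x, |itConv p k x - itConv q k x|) ≤ (k + 1 : ℝ) * ∫ x, |p x - q x| := by
  intro k
  induction k with
  | zero => simp [itConv]
  | succ k ih =>
    have hgp := itConv_integrable hp k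
    have hgq := itConv_integrable hq k
    have hA : Integrable ((itConv p k) ⋆[mulL] (fun y => p y - q y)) :=
      hgp.integrable_convolution mulL ((hp.2.2.2.1).sub (hq.2.2.2.1))
    have hB : Integrable ((fun y => itConv p k y - itConv q k y) ⋆[mulL] q) :=
      (hgp.sub hgq).integrable_convolution mulL (hq.2.2.2.1)
    have hae := conv_diff_ae hgp hgq (hp.2.2.2.1) (hq.2.2.2.1)
    calc (∫ x, |itConv p (k+1) x - itConv q (k+1) x|)
        = ∫ x, |((itConv p k) ⋆[mulL] p) x - ((itConv q k) ⋆[mulL] q) x| := by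
          rw [itConv_succ_eq_conv hp k, itConv_succ_eq_conv hq k]
      _ = ∫ x, |((itConv p k) ⋆[mulL] (fun y => p y - q y)) x
            + ((fun y => itConv p k y - itConv q k y) ⋆[mulL] q) x| := by
          apply MeasureTheory.integral_congr_ae
          filter_upwards [hae] with x hx
          rw [hx]
      _ ≤ ∫ x, (|((itConv p k) ⋆[mulL] (fun y => p y - q y)) x|
            + |((fun y => itConv p k y - itConv q k y) ⋆[mulL] q) x|) := by
          apply integral_mono (hA.add hB).abs (hA.abs.add hB.abs)
          intro x
          exact abs_add_le _ _
      _ = (∫ x, |((itConv p k) ⋆[mulL] (fun y => p y - q y)) x|)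
            + ∫ x, |((fun y => itConv p k y - itConv q k y) ⋆[mulL] q) x| :=
          integral_add hA.abs hB.abs
      _ ≤ (∫ x, |itConv p k x|) * (∫ x, |p x - q x|)
            + (∫ x, |itConv p k x - itConv q k x|) * (∫ x, |q x|) := by
          gcongr
          · exact conv_L1 hgp ((hp.2.2.2.1).sub (hq.2.2.2.1))
          · exact conv_L1 (hgp.sub hgq) (hq.2.2.2.1)
      _ ≤ (k + 1 + 1 : ℝ) * ∫ x, |p x - q x| := by
          rw [abs_itConv_integral hp k,
            show (∫ x, |q x|) = 1 from abs_itConv_integral hq 0]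
          have hnnd : (0:ℝ) ≤ ∫ x, |p x - q x| := by positivity
          nlinarith [ih]
      _ = (((k + 1 : ℕ) : ℝ) + 1) * ∫ x, |p x - q x| := by push_cast; ring

lemma ck_nonneg (t : ℝ) (ht : 0 ≤ t) (k : ℕ) : 0 ≤ ∫ s in (0:ℝ)..t, itConv p k s :=
  intervalIntegral.integral_nonneg ht fun s _ => itConv_nonneg hp k s

lemma ck_le (t : ℝ) (ht : 0 ≤ t) (k : ℕ) :
    (∫ s in (0:ℝ)..t, itConv p k s) ≤ Real.exp t * (rho p) ^ (k + 1) := by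
  have hint' := itConv_integrable hp k
  have hepint := ep_integrable hint' (itConv_zero_of_nonpos hp k)
  rw [intervalIntegral.integral_of_le ht]
  calc (∫ s in Set.Ioc (0:ℝ) t, itConv p k s)
      ≤ ∫ s in Set.Ioc (0:ℝ) t, Real.exp t * ep (itConv p k) s := by
        apply setIntegral_mono_on hint'.integrableOn (hepint.const_mul _).integrableOn
          measurableSet_Ioc
        intro s hs
        have h1 : 1 ≤ Real.exp t * Real.exp (-s) := by
          rw [← Real.exp_add]
          exact Real.one_le_exp (by linarith [hs.2])
        have h2 := itConv_nonneg hp k s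
        simp only [ep]
        nlinarith
    _ = Real.exp t * ∫ s in Set.Ioc (0:ℝ) t, ep (itConv p k) s := by
        rw [MeasureTheory.integral_const_mul]
    _ ≤ Real.exp t * ∫ s, ep (itConv p k) s := by
        apply mul_le_mul_of_nonneg_left _ (Real.exp_pos t).le
        apply setIntegral_le_integral hepint
        apply Filter.Eventually.of_forall
        intro s
        exact mul_nonneg (Real.exp_pos _).le (itConv_nonneg hp k s)
    _ = Real.exp t * (rho p) ^ (k + 1) := by rw [itConv_laplace hp k]

lemma ck_diff (hq : IsCtsDensity q) (t : ℝ) (ht : 0 ≤ t) (k : ℕ) :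
    |(∫ s in (0:ℝ)..t, itConv p k s) - ∫ s in (0:ℝ)..t, itConv q k s|
      ≤ (k + 1 : ℝ) * ∫ x, |p x - q x| := by
  have hgp := (itConv_integrable hp k).intervalIntegrable (a := 0) (b := t)
  have hgq := (itConv_integrable hq k).intervalIntegrable (a := 0) (b := t)
  calc |(∫ s in (0:ℝ)..t, itConv p k s) - ∫ s in (0:ℝ)..t, itConv q k s|
      = |∫ s in (0:ℝ)..t, (itConv p k s - itConv q k s)| := by
        rw [intervalIntegral.integral_sub hgp hgq]
    _ ≤ ∫ s in (0:ℝ)..t, |itConv p k s - itConv q k s| :=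
        intervalIntegral.abs_integral_le_integral_abs ht
    _ = ∫ s in Set.Ioc (0:ℝ) t, |itConv p k s - itConv q k s| :=
        intervalIntegral.integral_of_le ht
    _ ≤ ∫ s, |itConv p k s - itConv q k s| := by
        apply setIntegral_le_integral ((itConv_integrable hp k).sub (itConv_integrable hq k)).abs
        exact Filter.Eventually.of_forall fun s => abs_nonneg _
    _ ≤ (k + 1 : ℝ) * ∫ x, |p x - q x| := diff_L1 hp hq k

lemma rho_diff (hq : IsCtsDensity q) : rho q - rho p ≤ ∫ x, |p x - q x| := by
  have h1 : rho q - rho p = ∫ x, (ep q x - ep p x) := by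
    rw [rho, rho, ← integral_sub (ep_integrable (hq.2.2.2.1) (zero_of_nonpos hq))
      (ep_integrable (hp.2.2.2.1) (zero_of_nonpos hp))]
  rw [h1]
  apply integral_mono ((ep_integrable (hq.2.2.2.1) (zero_of_nonpos hq)).sub
    (ep_integrable (hp.2.2.2.1) (zero_of_nonpos hp))) ((hp.2.2.2.1).sub (hq.2.2.2.1)).abs
  intro x
  simp only [Pi.sub_apply]
  rcases le_or_gt x 0 with hx | hx
  · simp [ep, zero_of_nonpos hp x hx, zero_of_nonpos hq x hx]
  · simp only [ep]
    have h2 : Real.exp (-x) ≤ 1 := Real.exp_le_one_iff.mpr (by linarith)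
    have h3 := abs_nonneg (p x - q x)
    have h4 : q x - p x ≤ |p x - q x| := by
      rw [abs_sub_comm]; exact le_abs_self _
    have h5 : Real.exp (-x) * (q x - p x) ≤ |p x - q x| := by
      rcases le_or_gt (q x - p x) 0 with h | h
      · nlinarith [Real.exp_pos (-x)]
      · nlinarith
    nlinarith

end Stmt17

set_option maxHeartbeats 1000000 in
private theorem Stmt17.main (t : ℝ) (ht : 0 ≤ t) (p : ℝ → ℝ) (hp : IsCtsDensity p) :
    ∀ ε > (0:ℝ), ∃ δ > (0:ℝ), ∀ q : ℝ → ℝ, IsCtsDensity q →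
      (∫ x, |p x - q x|) < δ →
      |(∑' k : ℕ, ∫ s in (0:ℝ)..t, itConv p k s) -
        (∑' k : ℕ, ∫ s in (0:ℝ)..t, itConv q k s)| < ε := by
  intro ε hε
  have hρ0 : 0 ≤ rho p := rho_nonneg hp
  have hρ1 : rho p < 1 := rho_lt_one hp
  obtain ⟨ρ, hρdef⟩ : ∃ x : ℝ, x = rho p := ⟨_, rfl⟩
  rw [← hρdef] at hρ0 hρ1
  obtain ⟨r, hr⟩ : ∃ x : ℝ, x = (1 + ρ) / 2 := ⟨_, rfl⟩
  have hr0 : 0 < r := by rw [hr]; linarith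
  have hr1 : r < 1 := by rw [hr]; linarith
  have hρr : ρ < r := by rw [hr]; linarith
  have h1r : 0 < 1 - r := by linarith
  obtain ⟨C, hC⟩ : ∃ x : ℝ, x = 2 * Real.exp t / (1 - r) := ⟨_, rfl⟩
  have hC0 : 0 < C := by
    rw [hC]
    apply div_pos _ h1r
    positivity
  obtain ⟨N, hN⟩ := exists_pow_lt_of_lt_one (x := ε / (2 * C)) (by positivity) hr1
  obtain ⟨δ₂, hδ₂⟩ : ∃ x : ℝ, x = ε / (2 * ((N:ℝ)^2 + 1)) := ⟨_, rfl⟩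
  have hδ₂0 : 0 < δ₂ := by rw [hδ₂]; positivity
  refine ⟨min ((1 - ρ)/2) δ₂, lt_min (by linarith) hδ₂0, ?_⟩
  intro q hq hΔ
  obtain ⟨Δ, hΔdef⟩ : ∃ x : ℝ, x = ∫ x, |p x - q x| := ⟨_, rfl⟩
  rw [← hΔdef] at hΔ
  have hΔ0 : 0 ≤ Δ := hΔdef ▸ integral_nonneg fun x => abs_nonneg _
  have hrq : rho q ≤ r := by
    have h1 := rho_diff hp hq
    rw [← hΔdef, ← hρdef] at h1
    have h2 : Δ < (1 - ρ)/2 := lt_of_lt_of_le hΔ (min_le_left _ _)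
    rw [hr]; linarith
  have hrq0 : 0 ≤ rho q := rho_nonneg hq
  obtain ⟨cp, hcp⟩ : ∃ f : ℕ → ℝ, f = fun k => ∫ s in (0:ℝ)..t, itConv p k s := ⟨_, rfl⟩
  obtain ⟨cq, hcq⟩ : ∃ f : ℕ → ℝ, f = fun k => ∫ s in (0:ℝ)..t, itConv q k s := ⟨_, rfl⟩
  rw [show (∑' k : ℕ, ∫ s in (0:ℝ)..t, itConv p k s) = ∑' k, cp k by rw [hcp],
    show (∑' k : ℕ, ∫ s in (0:ℝ)..t, itConv q k s) = ∑' k, cq k by rw [hcq]]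
  have hcpb : ∀ k, cp k ≤ Real.exp t * r ^ (k+1) := by
    intro k
    rw [hcp]
    refine (ck_le hp t ht k).trans ?_
    apply mul_le_mul_of_nonneg_left _ (Real.exp_pos t).le
    rw [hρdef] at hρ0 hρr
    exact pow_le_pow_left₀ hρ0 hρr.le _
  have hcqb : ∀ k, cq k ≤ Real.exp t * r ^ (k+1) := by
    intro k
    rw [hcq]
    refine (ck_le hq t ht k).trans ?_
    apply mul_le_mul_of_nonneg_left _ (Real.exp_pos t).le
    exact pow_le_pow_left₀ hrq0 hrq _
  have hg : Summable (fun k : ℕ => Real.exp t * r ^ (k+1)) := by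
    apply Summable.congr ((summable_geometric_of_lt_one hr0.le hr1).mul_left (Real.exp t * r))
    intro k
    rw [pow_succ]
    ring
  have hcp0 : ∀ k, 0 ≤ cp k := fun k => by rw [hcp]; exact ck_nonneg hp t ht k
  have hcq0 : ∀ k, 0 ≤ cq k := fun k => by rw [hcq]; exact ck_nonneg hq t ht k
  have hsp : Summable cp := Summable.of_nonneg_of_le hcp0 hcpb hg
  have hsq : Summable cq := Summable.of_nonneg_of_le hcq0 hcqb hg
  have hd : ∀ k, |cp k - cq k| ≤ 2 * (Real.exp t * r ^ (k+1)) := by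
    intro k
    have h1 : |cp k - cq k| ≤ |cp k| + |cq k| := abs_sub _ _
    rw [abs_of_nonneg (hcp0 k), abs_of_nonneg (hcq0 k)] at h1
    linarith [hcpb k, hcqb k]
  have hsd : Summable (fun k => |cp k - cq k|) :=
    Summable.of_nonneg_of_le (fun _ => abs_nonneg _) hd (hg.mul_left 2)
  have key : |(∑' k, cp k) - ∑' k, cq k| ≤ ∑' k, |cp k - cq k| := by
    rw [← Summable.tsum_sub hsp hsq]
    have := norm_tsum_le_tsum_norm (f := fun k => cp k - cq k) (by simpa using hsd)
    simpa using this
  have split : (∑' k, |cp k - cq k|)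
      = (∑ k ∈ Finset.range N, |cp k - cq k|) + ∑' k, |cp (k + N) - cq (k + N)| :=
    (Summable.sum_add_tsum_nat_add N hsd).symm
  have hhead : (∑ k ∈ Finset.range N, |cp k - cq k|) ≤ (N:ℝ) * ((N:ℝ) * Δ) := by
    calc (∑ k ∈ Finset.range N, |cp k - cq k|) ≤ ∑ _k ∈ Finset.range N, ((N:ℝ) * Δ) := by
          apply Finset.sum_le_sum
          intro k hk
          rw [hcp, hcq]
          refine (ck_diff hp hq t ht k).trans (hΔdef ▸ ?_)
          have : (k:ℝ) + 1 ≤ (N:ℝ) := by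
            have := Finset.mem_range.mp hk
            exact_mod_cast Nat.succ_le_of_lt this
          exact mul_le_mul_of_nonneg_right this hΔ0
      _ = (N:ℝ) * ((N:ℝ) * Δ) := by
          rw [Finset.sum_const, Finset.card_range]
          simp [mul_assoc]
  have hsum2 : Summable (fun k : ℕ => (2 * Real.exp t * r^(N+1)) * r ^ k) :=
    (summable_geometric_of_lt_one hr0.le hr1).mul_left _
  have htail : (∑' k : ℕ, |cp (k + N) - cq (k + N)|) ≤ C * r ^ (N + 1) := by
    have hb : ∀ k : ℕ, |cp (k + N) - cq (k + N)| ≤ (2 * Real.exp t * r^(N+1)) * r ^ k := by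
      intro k
      refine (hd (k + N)).trans (le_of_eq ?_)
      rw [show k + N + 1 = (N + 1) + k by omega, pow_add]
      ring
    calc (∑' k : ℕ, |cp (k + N) - cq (k + N)|)
        ≤ ∑' k : ℕ, (2 * Real.exp t * r^(N+1)) * r ^ k :=
          Summable.tsum_le_tsum hb ((summable_nat_add_iff N).mpr hsd) hsum2
      _ = (2 * Real.exp t * r^(N+1)) * (1 - r)⁻¹ := by
          rw [tsum_mul_left, tsum_geometric_of_lt_one hr0.le hr1]
      _ = C * r ^ (N + 1) := by
          rw [hC, div_eq_mul_inv]; ring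
  have htail2 : C * r ^ (N + 1) ≤ C * r ^ N :=
    mul_le_mul_of_nonneg_left (pow_le_pow_of_le_one hr0.le hr1.le (Nat.le_succ N)) hC0.le
  have htail3 : C * r ^ N < ε / 2 := by
    have := (mul_lt_mul_iff_right₀ hC0).mpr hN
    have he : C * (ε / (2 * C)) = ε / 2 := by
      rw [← mul_div_assoc, mul_comm (2:ℝ) C, mul_div_mul_left _ _ hC0.ne']
    rw [he] at this
    exact this
  have hhead2 : (N:ℝ) * ((N:ℝ) * Δ) < ε / 2 := by
    have hΔδ₂ : Δ < δ₂ := lt_of_lt_of_le hΔ (min_le_right _ _)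
    rw [hδ₂] at hΔδ₂
    have h2 : Δ * (2 * ((N:ℝ)^2 + 1)) < ε := (lt_div_iff₀ (by positivity)).mp hΔδ₂
    have h3 : (N:ℝ) * ((N:ℝ) * Δ) = (N:ℝ)^2 * Δ := by ring
    linarith [hΔ0, h2, h3.le, h3.ge]
  calc |(∑' k, cp k) - ∑' k, cq k| ≤ ∑' k, |cp k - cq k| := key
    _ = (∑ k ∈ Finset.range N, |cp k - cq k|) + ∑' k, |cp (k + N) - cq (k + N)| := split
    _ < ε / 2 + ε / 2 := by
        have t1 : (∑' k : ℕ, |cp (k + N) - cq (k + N)|) < ε / 2 :=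
          lt_of_le_of_lt (htail.trans htail2) htail3
        have t2 : (∑ k ∈ Finset.range N, |cp k - cq k|) < ε / 2 :=
          lt_of_le_of_lt hhead hhead2
        linarith
    _ = ε := by ring

theorem stmt_17 (t : ℝ) (ht : 0 ≤ t) (p : ℝ → ℝ) (hp : IsCtsDensity p) :
    ∀ ε > (0:ℝ), ∃ δ > (0:ℝ), ∀ q : ℝ → ℝ, IsCtsDensity q →
      (∫ x, |p x - q x|) < δ →
      |(∑' k : ℕ, ∫ s in (0:ℝ)..t, itConv p k s) -
        (∑' k : ℕ, ∫ s in (0:ℝ)..t, itConv q k s)| < ε :=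
  Stmt17.main t ht p hp
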